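/- arXiv:0709.4370 — 6 statements merged into one kernel-verified Lean document; each statement's English description precedes it below -/
import Mathlib

section
/- Fix N ≥ 1, a threshold θ ∈ ℝ, and sequences γ_k(t) ∈ (0,1) and J_k(t) ∈ ℝ for k ∈ {1,…,N}, t ∈ ℕ. Let V and V′ be two trajectories of the recursion V_k(t+1) = γ_k(t)(1 − Z(V_k(t)))V_k(t) + J_k(t) (and likewise for V′, with the same sequences γ_k, J_k), and suppose they have the same raster plot up to time t, i.e. Z(V_k(s)) = Z(V′_k(s)) =: ω_k(s) for all k and all 0 ≤ s ≤ t. Then for every k, V_k(t+1) − V′_k(t+1) = σ_k(t)·(V_k(0) − V′_k(0)), where σ_k(t) = ∏_{s=0}^{t} γ_k(s)(1 − ω_k(s)), and 0 ≤ σ_k(t) < 1. In other words, on the set of initial conditions with a prescribed raster plot up to time t, the time-(t+1) flow is affine with diagonal linear part whose eigenvalues σ_k(t) all lie in [0,1), so it is a contraction. -/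
/-- `Z θ x = 1` if `x ≥ θ` (firing) and `0` otherwise. -/
noncomputable def Z (θ x : ℝ) : ℝ := if θ ≤ x then 1 else 0

lemma Z_factor_bounds {g : ℝ} (hg : 0 < g ∧ g < 1) (θ x : ℝ) :
    0 ≤ g * (1 - Z θ x) ∧ g * (1 - Z θ x) < 1 := by
  unfold Z
  split <;> constructor <;> nlinarith [hg.1, hg.2]

/-- Proposition 1 (phase-space contraction): two trajectories of the
discrete-time Integrate-and-Fire recursion driven by the same sequences
`γ_k, J_k` and having the same raster plot up to time `t` satisfy
`V_k(t+1) - V'_k(t+1) = σ_k(t) (V_k(0) - V'_k(0))` with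
`σ_k(t) = ∏_{s=0}^{t} γ_k(s)(1-ω_k(s)) ∈ [0,1)`. -/
theorem IF_flow_affine_contraction
    (N : ℕ) (hN : 1 ≤ N) (θ : ℝ)
    (γ J : ℕ → Fin N → ℝ)
    (hγ : ∀ t k, 0 < γ t k ∧ γ t k < 1)
    (V V' : ℕ → Fin N → ℝ)
    (hrec : ∀ t k, V (t + 1) k =
      γ t k * (1 - Z θ (V t k)) * V t k + J t k)
    (hrec' : ∀ t k, V' (t + 1) k =
      γ t k * (1 - Z θ (V' t k)) * V' t k + J t k)
    (t : ℕ)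
    (hraster : ∀ k, ∀ s ≤ t, Z θ (V s k) = Z θ (V' s k)) :
    ∀ k, V (t + 1) k - V' (t + 1) k =
        (∏ s ∈ Finset.range (t + 1), γ s k * (1 - Z θ (V s k)))
          * (V 0 k - V' 0 k)
      ∧ 0 ≤ ∏ s ∈ Finset.range (t + 1), γ s k * (1 - Z θ (V s k))
      ∧ (∏ s ∈ Finset.range (t + 1), γ s k * (1 - Z θ (V s k))) < 1 := by
  induction t with
  | zero =>
    intro k
    have hz := hraster k 0 le_rfl
    have hb := Z_factor_bounds (hγ 0 k) θ (V 0 k)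
    refine ⟨?_, ?_, ?_⟩
    · rw [hrec 0 k, hrec' 0 k, Finset.prod_range_one, ← hz]; ring
    · rw [Finset.prod_range_one]; exact hb.1
    · rw [Finset.prod_range_one]; exact hb.2
  | succ t ih =>
    intro k
    have ih' := ih (fun k s hs => hraster k s (hs.trans (Nat.le_succ t))) k
    have hz := hraster k (t + 1) le_rfl
    have hb := Z_factor_bounds (hγ (t + 1) k) θ (V (t + 1) k)
    have key : V (t + 2) k - V' (t + 2) k
        = γ (t + 1) k * (1 - Z θ (V (t + 1) k)) * (V (t + 1) k - V' (t + 1) k) := by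
      rw [hrec (t + 1) k, hrec' (t + 1) k, ← hz]; ring
    rw [Finset.prod_range_succ]
    refine ⟨?_, ?_, ?_⟩
    · rw [key, ih'.1]; ring
    · exact mul_nonneg ih'.2.1 hb.1
    · nlinarith [ih'.2.1, ih'.2.2, hb.1, hb.2]
end

section
/- Fix N ≥ 1, a threshold θ ∈ ℝ, and for each t ∈ ℕ functions Γ_k(t, ·) ∈ (0,1) and J_k(t, ·) ∈ ℝ of the raster prefix (ω(0),…,ω(t)) ∈ ({0,1}^N)^{t+1}. Define the flow Φ : ℕ × ℝ^N → ℝ^N recursively by Φ(0,V) = V and Φ(t+1,V)_k = Γ_k(t, ω̃_t(V))·(1 − Z(Φ(t,V)_k))·Φ(t,V)_k + J_k(t, ω̃_t(V)), where ω̃_t(V) = (Z(Φ(s,V)_j))_{0≤s≤t, 1≤j≤N} is the raster prefix of the trajectory of V and Z(x) = 1 if x ≥ θ, else 0. Then for every t ∈ ℕ and every prescribed raster prefix ω̃ = (ω(0),…,ω(t)), the set M_{[ω̃]_t} = { V ∈ ℝ^N : for all 0 ≤ s ≤ t and all k, Z(Φ(s,V)_k) = ω_k(s) } is convex (and hence connected).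 -/
open Classical in
/-- Corollary 1: for the discrete-time Integrate-and-Fire flow whose contraction
factors `Γ` and currents `J` depend only on time and on the raster prefix of the
trajectory, the set `M_{[ω̃]_t}` of initial conditions whose firing pattern up to
time `t` is the prescribed raster prefix `ω` is convex (and hence connected). -/
theorem IF_raster_domain_convex
    (N : ℕ) (hN : 1 ≤ N) (θ : ℝ)
    (Γ J : (t : ℕ) → (Fin (t + 1) → Fin N → Bool) → Fin N → ℝ)
    (hΓ : ∀ t p k, 0 < Γ t p k ∧ Γ t p k < 1)
    (Φ : ℕ → (Fin N → ℝ) → (Fin N → ℝ))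
    (hΦ0 : ∀ V, Φ 0 V = V)
    (hΦ : ∀ t V k, Φ (t + 1) V k =
      Γ t (fun s j => decide (θ ≤ Φ s V j)) k * (1 - Z θ (Φ t V k)) * Φ t V k
        + J t (fun s j => decide (θ ≤ Φ s V j)) k)
    (t : ℕ) (ω : ℕ → Fin N → Bool) :
    Convex ℝ {V : Fin N → ℝ | ∀ s ≤ t, ∀ k, (θ ≤ Φ s V k ↔ ω s k = true)}
    ∧ IsPreconnected {V : Fin N → ℝ | ∀ s ≤ t, ∀ k, (θ ≤ Φ s V k ↔ ω s k = true)} := by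
  have hconv : Convex ℝ {V : Fin N → ℝ | ∀ s ≤ t, ∀ k, (θ ≤ Φ s V k ↔ ω s k = true)} := by
    intro V hV W hW a b ha hb hab
    set U := a • V + b • W with hU
    -- convex combination respects threshold side
    have combo : ∀ x y : ℝ, (θ ≤ x ↔ θ ≤ y) → (θ ≤ a * x + b * y ↔ θ ≤ x) := by
      intro x y hxy
      constructor
      · intro h
        by_contra hx
        push_neg at hx
        have hy : y < θ := by
          by_contra hy; push_neg at hy; exact absurd (hxy.mpr hy) (not_le.mpr hx)
        rcases (show 0 < a ∨ 0 < b by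
          rcases lt_or_eq_of_le ha with h1 | h1
          · exact Or.inl h1
          · right; linarith) with hpa | hpb
        · have e : a * θ + b * θ = θ := by linear_combination θ * hab
          have h1 : a * x < a * θ := mul_lt_mul_of_pos_left hx hpa
          have h2 : b * y ≤ b * θ := mul_le_mul_of_nonneg_left hy.le hb
          linarith
        · have e : a * θ + b * θ = θ := by linear_combination θ * hab
          have h1 : a * x ≤ a * θ := mul_le_mul_of_nonneg_left hx.le ha
          have h2 : b * y < b * θ := mul_lt_mul_of_pos_left hy hpb
          linarith
      · intro hx
        have hy : θ ≤ y := hxy.mp hx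
        have e : a * θ + b * θ = θ := by linear_combination θ * hab
        have h1 : a * θ ≤ a * x := mul_le_mul_of_nonneg_left hx ha
        have h2 : b * θ ≤ b * y := mul_le_mul_of_nonneg_left hy hb
        linarith
    have key : ∀ s, s ≤ t → ∀ k, Φ s U k = a * Φ s V k + b * Φ s W k := by
      intro s
      induction s using Nat.strong_induction_on with
      | _ s ih =>
        match s with
        | 0 =>
          intro _ k
          simp [hΦ0, hU, smul_eq_mul]
        | Nat.succ s =>
          intro hst k
          have hs : s ≤ t := Nat.le_of_succ_le hst
          -- threshold agreement at all times s' ≤ s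
          have hiff : ∀ s' ≤ s, ∀ j, (θ ≤ Φ s' U j ↔ θ ≤ Φ s' V j) := by
            intro s' hs' j
            have hs't : s' ≤ t := le_trans hs' hs
            have h1 := ih s' (Nat.lt_succ_of_le hs') hs't j
            rw [h1]
            exact (combo _ _ ((hV s' hs't j).trans (hW s' hs't j).symm))
          have hiffW : ∀ s' ≤ s, ∀ j, (θ ≤ Φ s' U j ↔ θ ≤ Φ s' W j) := by
            intro s' hs' j
            have hs't : s' ≤ t := le_trans hs' hs
            exact (hiff s' hs' j).trans ((hV s' hs't j).trans (hW s' hs't j).symm)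
          -- raster prefixes agree
          have hrV : (fun (s' : Fin (s + 1)) (j : Fin N) => decide (θ ≤ Φ s' U j))
              = (fun (s' : Fin (s + 1)) (j : Fin N) => decide (θ ≤ Φ s' V j)) := by
            funext s' j
            exact decide_eq_decide.mpr (hiff s'.1 (Nat.lt_succ_iff.mp s'.2) j)
          have hrW : (fun (s' : Fin (s + 1)) (j : Fin N) => decide (θ ≤ Φ s' U j))
              = (fun (s' : Fin (s + 1)) (j : Fin N) => decide (θ ≤ Φ s' W j)) := by
            funext s' j
            exact decide_eq_decide.mpr (hiffW s'.1 (Nat.lt_succ_iff.mp s'.2) j)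
          have hzV : Z θ (Φ s U k) = Z θ (Φ s V k) := by
            unfold Z
            simp only [hiff s le_rfl k]
          have hzW : Z θ (Φ s U k) = Z θ (Φ s W k) := by
            unfold Z
            simp only [hiffW s le_rfl k]
          have hUs : Φ s U k = a * Φ s V k + b * Φ s W k :=
            ih s (Nat.lt_succ_self s) hs k
          have hzVW : Z θ (Φ s V k) = Z θ (Φ s W k) := by rw [← hzV, hzW]
          rw [hΦ s U k, hΦ s V k, hΦ s W k, ← hrV, ← hrW, hzV, hUs, ← hzVW]
          have hb' : b = 1 - a := by linarith
          subst hb'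
          ring
    intro s hs k
    rw [key s hs k]
    exact (combo _ _ ((hV s hs k).trans (hW s hs k).symm)).trans (hV s hs k)
  exact ⟨hconv, hconv.isPreconnected⟩
end

section
/- Fix N ≥ 1, a threshold θ ∈ ℝ, and sequences γ_k(t) ∈ (0,1) and J_k(t) ∈ ℝ for k ∈ {1,…,N}, t ∈ ℕ. Let V and V′ be two trajectories of the recursion V_k(t+1) = γ_k(t)(1 − Z(V_k(t)))V_k(t) + J_k(t) (with the same sequences γ_k, J_k) having the same raster plot up to some finite time t, i.e. Z(V_k(s)) = Z(V′_k(s)) =: ω_k(s) for all k and all 0 ≤ s ≤ t. If every neuron fires at least once by time t — that is, for every k ∈ {1,…,N} there exists s ≤ t with ω_k(s) = 1 — then V(t+1) = V′(t+1); consequently all orbits born from the set of initial conditions with this raster plot converge to the same orbit in finite time (the image of this set under the time-(t+1) flow is a single point). -/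
/-- Proposition 2, item 1: if two trajectories of the discrete-time
Integrate-and-Fire network share the same raster plot up to time `t` and every
neuron has fired at least once by time `t`, then the trajectories coincide at
time `t+1`: all orbits born from the set of initial conditions with this raster
plot collapse onto the same orbit in finite time. -/
theorem IF_all_fired_collapse
    (N : ℕ) (hN : 1 ≤ N) (θ : ℝ)
    (γ J : ℕ → Fin N → ℝ)
    (hγ : ∀ t k, 0 < γ t k ∧ γ t k < 1)
    (V V' : ℕ → Fin N → ℝ)
    (hrec : ∀ t k, V (t + 1) k =
      γ t k * (1 - Z θ (V t k)) * V t k + J t k)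
    (hrec' : ∀ t k, V' (t + 1) k =
      γ t k * (1 - Z θ (V' t k)) * V' t k + J t k)
    (t : ℕ)
    (hraster : ∀ k, ∀ s ≤ t, Z θ (V s k) = Z θ (V' s k))
    (hfired : ∀ k, ∃ s ≤ t, Z θ (V s k) = 1) :
    V (t + 1) = V' (t + 1) := by
  funext k
  obtain ⟨s, hs, hfire⟩ := hfired k
  -- show by induction: for all r with s < r ≤ t+1, V r k = V' r k
  have key : ∀ m, s + 1 + m ≤ t + 1 → V (s + 1 + m) k = V' (s + 1 + m) k := by
    intro m
    induction m with
    | zero =>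
      intro _
      rw [hrec s k, hrec' s k, ← hraster k s hs, hfire]
      ring
    | succ n ih =>
      intro h
      have hn : s + 1 + n ≤ t := by omega
      have heq : s + 1 + (n + 1) = (s + 1 + n) + 1 := by omega
      rw [heq, hrec _ k, hrec' _ k, ih (by omega)]
  have : s + 1 + (t - s) = t + 1 := by omega
  have := key (t - s) (by omega)
  rwa [‹s + 1 + (t - s) = t + 1›] at this
end

section
/- Consider the BMS map F : ℝ^N → ℝ^N, F_k(V) = γ·V_k·(1 − Z(V_k)) + ∑_{j=1}^{N} W_{kj}·Z(V_j) + I_k, where Z(x) = 1 if x ≥ θ and 0 otherwise, γ ∈ [0,1), W ∈ ℝ^{N×N}, I ∈ ℝ^N, and let M = [V_min, V_max]^N be a compact cube with F(M) ⊆ M. Let Ω = ⋃_{V ∈ M} ω(V) be the ω-limit set of M and d(Ω, 𝒮) = inf_{x ∈ Ω} min_{1≤i≤N} |x_i − θ| its distance to the singularity set 𝒮 = { V ∈ M : ∃ i, V_i = θ }. If d(Ω, 𝒮) > 0, then Ω is composed of finitely many periodic orbits of finite period: Ω is a finite set and every x ∈ Ω satisfies F^p(x) = x for some integer p ≥ 1.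 -/
/-- The ω-limit set of a point `V` under the map `F`: the set of accumulation
points of the orbit `(F^[t] V)`, i.e. limits of `F^[t_k] V` along strictly
increasing sequences of times `t_k → ∞`. -/
def omegaPts {α : Type*} [TopologicalSpace α] (F : α → α) (V : α) : Set α :=
  {y | ∃ φ : ℕ → ℕ, StrictMono φ ∧
    Filter.Tendsto (fun n => F^[φ n] V) Filter.atTop (nhds y)}

lemma Z_eq_of_close {θ d x z : ℝ} (hd : d ≤ |x - θ|) (hz : |z - x| < d) :
    Z θ z = Z θ x := by
  have h1 := abs_lt.mp hz
  unfold Z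
  rcases le_or_gt θ x with h | h
  · have hxθ : d ≤ x - θ := by rwa [abs_of_nonneg (by linarith)] at hd
    rw [if_pos h, if_pos (by linarith)]
  · have hxθ : d ≤ θ - x := by
      rw [abs_of_neg (by linarith)] at hd; linarith
    rw [if_neg (not_le.mpr h), if_neg (not_le.mpr (by linarith))]

lemma Z_cases (θ x : ℝ) : Z θ x = 0 ∨ Z θ x = 1 := by
  unfold Z; split <;> simp

lemma contract_step {N : ℕ} {θ γ : ℝ} (hγ0 : 0 ≤ γ)
    {W : Fin N → Fin N → ℝ} {I : Fin N → ℝ} {F : (Fin N → ℝ) → (Fin N → ℝ)}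
    (hF : ∀ V k, F V k =
      γ * V k * (1 - Z θ (V k)) + (∑ j, W k j * Z θ (V j)) + I k)
    {d : ℝ} {x z : Fin N → ℝ} (hx : ∀ i, d ≤ |x i - θ|) (hz : dist z x < d) :
    dist (F z) (F x) ≤ γ * dist z x := by
  have hZ : ∀ j, Z θ (z j) = Z θ (x j) := by
    intro j
    refine Z_eq_of_close (hx j) (lt_of_le_of_lt ?_ hz)
    rw [← Real.dist_eq]; exact dist_le_pi_dist z x j
  refine (dist_pi_le_iff (by positivity)).mpr ?_
  intro k
  have hk : dist (z k) (x k) ≤ dist z x := dist_le_pi_dist z x k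
  rw [hF, hF, hZ k, Real.dist_eq]
  have hsum : (∑ j, W k j * Z θ (z j)) = ∑ j, W k j * Z θ (x j) :=
    Finset.sum_congr rfl fun j _ => by rw [hZ j]
  rw [hsum]
  have heq : γ * z k * (1 - Z θ (x k)) + (∑ j, W k j * Z θ (x j)) + I k -
      (γ * x k * (1 - Z θ (x k)) + (∑ j, W k j * Z θ (x j)) + I k) =
      γ * (1 - Z θ (x k)) * (z k - x k) := by ring
  rw [heq]
  rcases Z_cases θ (x k) with h | h <;> rw [h]
  · simp only [sub_zero, mul_one]
    rw [abs_mul, abs_of_nonneg hγ0]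
    have : |z k - x k| ≤ dist z x := by rw [← Real.dist_eq]; exact hk
    exact mul_le_mul_of_nonneg_left this hγ0
  · simp only [sub_self, mul_zero, zero_mul, abs_zero]
    positivity

lemma continuousAt_F {N : ℕ} {θ γ : ℝ}
    {W : Fin N → Fin N → ℝ} {I : Fin N → ℝ} {F : (Fin N → ℝ) → (Fin N → ℝ)}
    (hF : ∀ V k, F V k =
      γ * V k * (1 - Z θ (V k)) + (∑ j, W k j * Z θ (V j)) + I k)
    {d : ℝ} (hd : 0 < d) {x : Fin N → ℝ} (hx : ∀ i, d ≤ |x i - θ|) :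
    ContinuousAt F x := by
  have hG : ContinuousAt (fun V k => γ * V k * (1 - Z θ (x k)) +
      (∑ j, W k j * Z θ (x j)) + I k) x := by
    refine Continuous.continuousAt ?_
    refine continuous_pi fun k => ?_
    exact (((continuous_const.mul (continuous_apply k)).mul continuous_const).add
      continuous_const).add continuous_const
  refine hG.congr ?_
  filter_upwards [Metric.ball_mem_nhds x hd] with V hV
  have hVd : dist V x < d := Metric.mem_ball.mp hV
  have hZ : ∀ j, Z θ (V j) = Z θ (x j) := by
    intro j
    refine Z_eq_of_close (hx j) (lt_of_le_of_lt ?_ hVd)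
    rw [← Real.dist_eq]; exact dist_le_pi_dist V x j
  funext k
  rw [hF, hZ k]
  congr 2
  exact Finset.sum_congr rfl fun j _ => by rw [hZ j]

/-- Theorem 2, item 1 of the paper: if the ω-limit set `Ω` of the invariant cube
`M` under the BMS map stays at a positive distance from the singularity set
`𝒮 = {V : ∃ i, V i = θ}`, then `Ω` is composed of finitely many periodic
orbits of finite period. -/
theorem BMS_positive_distance_periodic
    (N : ℕ) (hN : 1 ≤ N) (θ γ : ℝ) (hγ0 : 0 ≤ γ) (hγ1 : γ < 1)
    (W : Fin N → Fin N → ℝ) (I : Fin N → ℝ)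
    (F : (Fin N → ℝ) → (Fin N → ℝ))
    (hF : ∀ V k, F V k =
      γ * V k * (1 - Z θ (V k)) + (∑ j, W k j * Z θ (V j)) + I k)
    (Vmin Vmax : ℝ)
    (M : Set (Fin N → ℝ))
    (hM : M = {V | ∀ k, V k ∈ Set.Icc Vmin Vmax})
    (hInv : ∀ V ∈ M, F V ∈ M)
    (Ω : Set (Fin N → ℝ))
    (hΩ : Ω = ⋃ V ∈ M, omegaPts F V)
    (hdist : ∃ d : ℝ, 0 < d ∧ ∀ x ∈ Ω, ∀ i : Fin N, d ≤ |x i - θ|) :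
    Ω.Finite ∧ ∀ x ∈ Ω, ∃ p : ℕ, 1 ≤ p ∧ F^[p] x = x := by
  classical
  obtain ⟨d, hd0, hdΩ⟩ := hdist
  have h1γ : 0 < 1 - γ := by linarith
  -- M is compact
  have hMeq : M = Set.pi Set.univ fun _ : Fin N => Set.Icc Vmin Vmax := by
    rw [hM]; ext V
    constructor
    · intro h i _; exact h i
    · intro h k; exact h k (Set.mem_univ k)
  have hMcompact : IsCompact M := by
    rw [hMeq]; exact isCompact_univ_pi fun _ => isCompact_Icc
  -- orbits stay in M
  have horbM : ∀ V ∈ M, ∀ t, F^[t] V ∈ M := by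
    intro V hV t
    induction t with
    | zero => simpa using hV
    | succ t ih => rw [Function.iterate_succ_apply']; exact hInv _ ih
  -- Ω ⊆ M
  have hΩM : Ω ⊆ M := by
    intro x hx
    rw [hΩ] at hx
    obtain ⟨V, hV, φ, hφ, hlim⟩ := Set.mem_iUnion₂.mp hx
    exact hMcompact.isClosed.mem_of_tendsto hlim
      (Filter.Eventually.of_forall fun n => horbM V hV _)
  -- ω-limit sets of points of M are in Ω
  have hsubΩ : ∀ x ∈ M, omegaPts F x ⊆ Ω := by
    intro x hx y hy
    rw [hΩ]
    exact Set.mem_iUnion₂.mpr ⟨x, hx, hy⟩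
  -- F is continuous at points of Ω
  have hcont : ∀ x ∈ Ω, ContinuousAt F x := fun x hx =>
    continuousAt_F hF hd0 (hdΩ x hx)
  -- Ω is F-invariant
  have hΩinv : ∀ x ∈ Ω, F x ∈ Ω := by
    intro x hx
    have hx' := hx
    rw [hΩ] at hx'
    obtain ⟨V, hV, φ, hφ, hlim⟩ := Set.mem_iUnion₂.mp hx'
    rw [hΩ]
    refine Set.mem_iUnion₂.mpr ⟨V, hV, fun n => φ n + 1, hφ.add_const 1, ?_⟩
    have := (hcont x hx).tendsto.comp hlim
    simpa [Function.comp_def, Function.iterate_succ_apply'] using this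
  have hiterΩ : ∀ x ∈ Ω, ∀ t, F^[t] x ∈ Ω := by
    intro x hx t
    induction t with
    | zero => simpa using hx
    | succ t ih => rw [Function.iterate_succ_apply']; exact hΩinv _ ih
  -- iterated contraction near Ω
  have hcontr : ∀ x ∈ Ω, ∀ z, dist z x < d →
      ∀ t, dist (F^[t] z) (F^[t] x) ≤ γ ^ t * dist z x := by
    intro x hx z hz t
    induction t with
    | zero => simp
    | succ t ih =>
      have hpow : γ ^ t ≤ 1 := pow_le_one₀ hγ0 hγ1.le
      have hlt : dist (F^[t] z) (F^[t] x) < d := by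
        have : γ ^ t * dist z x ≤ dist z x := by nlinarith [dist_nonneg (x := z) (y := x)]
        linarith [ih]
      rw [Function.iterate_succ_apply', Function.iterate_succ_apply']
      calc dist (F (F^[t] z)) (F (F^[t] x)) ≤ γ * dist (F^[t] z) (F^[t] x) :=
            contract_step hγ0 hF (hdΩ _ (hiterΩ x hx t)) hlt
        _ ≤ γ * (γ ^ t * dist z x) := mul_le_mul_of_nonneg_left ih hγ0
        _ = γ ^ (t + 1) * dist z x := by ring
  -- iterates of F are continuous at points of Ω
  have hcontFt : ∀ x ∈ Ω, ∀ q, ContinuousAt (F^[q]) x := by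
    intro x hx q
    induction q with
    | zero => simpa using continuousAt_id
    | succ q ih =>
      rw [Function.iterate_succ']
      exact (hcont _ (hiterΩ x hx q)).comp ih
  -- recurrence: points of Ω return arbitrarily close to themselves
  have hrec : ∀ x ∈ Ω, ∀ ε > 0, ∃ p, 1 ≤ p ∧ dist (F^[p] x) x < ε := by
    intro x hx ε hε
    have hx' := hx
    rw [hΩ] at hx'
    obtain ⟨V, hV, φ, hφ, hlim⟩ := Set.mem_iUnion₂.mp hx'
    have hδ : 0 < min (ε / 2) d := lt_min (by linarith) hd0
    have hev : ∀ᶠ n in Filter.atTop, dist (F^[φ n] V) x < min (ε / 2) d :=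
      (Metric.tendsto_nhds.mp hlim) _ hδ
    obtain ⟨n₀, hn₀⟩ := hev.exists
    set z := F^[φ n₀] V with hzdef
    have hzx : dist z x < min (ε / 2) d := hn₀
    -- find T with 1 ≤ T and γ^T * d < ε/2
    have htend : Filter.Tendsto (fun n : ℕ => γ ^ n * d) Filter.atTop (nhds 0) := by
      have := (tendsto_pow_atTop_nhds_zero_of_lt_one hγ0 hγ1).mul_const d
      simpa using this
    have hevT : ∀ᶠ n : ℕ in Filter.atTop, γ ^ n * d < ε / 2 :=
      htend.eventually_lt_const (by linarith)
    obtain ⟨T, hTlt, hT1⟩ := (hevT.and (Filter.eventually_ge_atTop 1)).exists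
    obtain ⟨m, hm1, hm2⟩ := (hev.and (Filter.eventually_ge_atTop (φ n₀ + T))).exists
    have hφm : φ n₀ + T ≤ φ m := le_trans hm2 hφ.le_apply
    set p := φ m - φ n₀ with hpdef
    have hTp : T ≤ p := Nat.le_sub_of_add_le (by omega)
    have hp1 : 1 ≤ p := le_trans hT1 hTp
    have hiter : F^[p] z = F^[φ m] V := by
      rw [hzdef, ← Function.iterate_add_apply]
      congr 1
      omega
    have hzd : dist z x < d := lt_of_lt_of_le hzx (min_le_right _ _)
    have h1 : dist (F^[p] z) (F^[p] x) ≤ γ ^ p * dist z x := hcontr x hx z hzd p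
    have hpow : γ ^ p ≤ γ ^ T := pow_le_pow_of_le_one hγ0 hγ1.le hTp
    have h2 : γ ^ p * dist z x ≤ γ ^ T * d := by
      have h3 : (0:ℝ) ≤ dist z x := dist_nonneg
      have h4 : dist z x ≤ d := hzd.le
      have h5 : (0:ℝ) ≤ γ ^ T := pow_nonneg hγ0 T
      nlinarith [pow_nonneg hγ0 p]
    refine ⟨p, hp1, ?_⟩
    calc dist (F^[p] x) x ≤ dist (F^[p] x) (F^[p] z) + dist (F^[p] z) x := dist_triangle _ _ _
      _ < ε / 2 + ε / 2 := by
          refine add_lt_add_of_le_of_lt ?_ ?_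
          · rw [dist_comm]; exact le_trans h1 (le_trans h2 hTlt.le)
          · rw [hiter]; exact lt_of_lt_of_le hm1 (min_le_left _ _)
      _ = ε := by ring
  -- construction of a nearby periodic point
  have hper : ∀ x ∈ Ω, ∀ p, 1 ≤ p → dist (F^[p] x) x < d * (1 - γ) →
      ∃ y ∈ Ω, F^[p] y = y ∧ dist x y ≤ dist (F^[p] x) x / (1 - γ) := by
    intro x hx p hp1 hε
    set ε := dist (F^[p] x) x with hεdef
    have hε0 : 0 ≤ ε := dist_nonneg
    have hεd : ε / (1 - γ) < d := (div_lt_iff₀ h1γ).mpr (by linarith [hε])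
    have hεltd : ε < d := by nlinarith
    set g := F^[p] with hgdef
    have hgx : ∀ j, g^[j] x = F^[p * j] x := by
      intro j; rw [Function.iterate_mul]
    have hgΩ : ∀ j, g^[j] x ∈ Ω := by
      intro j; rw [hgx]; exact hiterΩ x hx _
    have hγp : γ ^ p ≤ γ := by
      have := pow_le_pow_of_le_one hγ0 hγ1.le hp1
      simpa using this
    have claimA : ∀ j, dist (g^[j] x) x ≤ ε / (1 - γ) := by
      intro j
      induction j with
      | zero => simp; positivity
      | succ j ih =>
        have hlt : dist (g^[j] x) x < d := lt_of_le_of_lt ih hεd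
        have h1 : dist (F^[p] (g^[j] x)) (F^[p] x) ≤ γ ^ p * dist (g^[j] x) x :=
          hcontr x hx _ hlt p
        have h2 : γ ^ p * dist (g^[j] x) x ≤ γ * (ε / (1 - γ)) := by
          have h3 : (0:ℝ) ≤ dist (g^[j] x) x := dist_nonneg
          nlinarith [pow_nonneg hγ0 p]
        rw [Function.iterate_succ_apply']
        calc dist (g (g^[j] x)) x ≤ dist (g (g^[j] x)) (g x) + dist (g x) x :=
              dist_triangle _ _ _
          _ ≤ γ * (ε / (1 - γ)) + ε := add_le_add (le_trans h1 h2) le_rfl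
          _ = ε / (1 - γ) := by field_simp; ring
    have claimB : ∀ j, dist (g^[j] x) (g^[j+1] x) ≤ ε * γ ^ j := by
      intro j
      have h1 : dist (F^[p*j] (F^[p] x)) (F^[p*j] x) ≤ γ ^ (p*j) * ε :=
        hcontr x hx (F^[p] x) hεltd (p*j)
      have hjle : j ≤ p * j := Nat.le_mul_of_pos_left j (by omega)
      have hpow : γ ^ (p*j) ≤ γ ^ j := pow_le_pow_of_le_one hγ0 hγ1.le hjle
      have h2 : γ ^ (p*j) * ε ≤ γ ^ j * ε := mul_le_mul_of_nonneg_right hpow hε0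
      calc dist (g^[j] x) (g^[j+1] x) = dist (F^[p*j] x) (F^[p*j] (F^[p] x)) := by
            rw [Function.iterate_succ_apply, hgx]
            rw [hgdef, ← Function.iterate_mul]
          _ ≤ γ ^ j * ε := by rw [dist_comm]; exact le_trans h1 h2
          _ = ε * γ ^ j := by ring
    have hcauchy : CauchySeq (fun j => g^[j] x) :=
      cauchySeq_of_le_geometric γ ε hγ1 claimB
    obtain ⟨y, hy⟩ := cauchySeq_tendsto_of_complete hcauchy
    have hyΩ : y ∈ Ω := by
      refine hsubΩ x (hΩM hx) ⟨fun j => p * (j + 1), ?_, ?_⟩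
      · intro a b hab
        exact mul_lt_mul_of_pos_left (by omega : a + 1 < b + 1) (by omega : 0 < p)
      · have h3 : Filter.Tendsto (fun j => g^[j+1] x) Filter.atTop (nhds y) :=
          hy.comp (Filter.tendsto_add_atTop_nat 1)
        refine h3.congr fun j => ?_
        rw [hgx]
    have hfix : F^[p] y = y := by
      have hc : ContinuousAt g y := hcontFt y hyΩ p
      have h1 : Filter.Tendsto (fun j => g (g^[j] x)) Filter.atTop (nhds (g y)) :=
        hc.tendsto.comp hy
      have h2 : Filter.Tendsto (fun j => g (g^[j] x)) Filter.atTop (nhds y) := by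
        have h3 := hy.comp (Filter.tendsto_add_atTop_nat 1)
        refine h3.congr fun j => ?_
        simp [Function.comp, Function.iterate_succ_apply']
      exact tendsto_nhds_unique h1 h2
    have hdistxy : dist x y ≤ ε / (1 - γ) := by
      have h1 : Filter.Tendsto (fun j => dist (g^[j] x) x) Filter.atTop
          (nhds (dist y x)) := hy.dist tendsto_const_nhds
      have h2 := le_of_tendsto' h1 claimA
      rwa [dist_comm]
    exact ⟨y, hyΩ, hfix, hdistxy⟩
  -- separation of periodic points
  have hsep : ∀ y ∈ Ω, ∀ y' ∈ Ω, (∃ p, 1 ≤ p ∧ F^[p] y = y) →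
      (∃ q, 1 ≤ q ∧ F^[q] y' = y') → dist y y' < d → y = y' := by
    rintro y hy y' hy' ⟨p, hp1, hpy⟩ ⟨q, hq1, hqy⟩ hdyy
    have hfy : F^[p*q] y = y := by
      rw [Function.iterate_mul]
      exact Function.iterate_fixed hpy q
    have hfy' : F^[p*q] y' = y' := by
      rw [mul_comm, Function.iterate_mul]
      exact Function.iterate_fixed hqy p
    have h1 : dist (F^[p*q] y) (F^[p*q] y') ≤ γ ^ (p*q) * dist y y' :=
      hcontr y' hy' y hdyy (p*q)
    rw [hfy, hfy'] at h1
    have hpq1 : 1 ≤ p * q := Nat.one_le_iff_ne_zero.mpr (by positivity)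
    have hγpq : γ ^ (p*q) ≤ γ := by
      have h2 := pow_le_pow_of_le_one hγ0 hγ1.le hpq1
      simpa using h2
    have hd0' : (0:ℝ) ≤ dist y y' := dist_nonneg
    have h3 : dist y y' ≤ 0 := by nlinarith
    exact dist_le_zero.mp h3
  -- every point of Ω is periodic
  have hallper : ∀ x ∈ Ω, ∃ p, 1 ≤ p ∧ F^[p] x = x := by
    intro x hx
    have H : ∀ n : ℕ, ∃ y, y ∈ Ω ∧ (∃ p, 1 ≤ p ∧ F^[p] y = y) ∧
        dist x y ≤ d / (4 * (n + 1)) := by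
      intro n
      have hεn : (0:ℝ) < d * (1 - γ) / (4 * (n + 1)) := by positivity
      obtain ⟨p, hp1, hplt⟩ := hrec x hx _ hεn
      have hltd : dist (F^[p] x) x < d * (1 - γ) := by
        refine lt_of_lt_of_le hplt ?_
        rw [div_le_iff₀ (by positivity)]
        nlinarith [mul_pos hd0 h1γ, Nat.cast_nonneg (α := ℝ) n]
      obtain ⟨y, hyΩ, hfix, hdxy⟩ := hper x hx p hp1 hltd
      refine ⟨y, hyΩ, ⟨p, hp1, hfix⟩, ?_⟩
      refine le_trans hdxy ?_
      rw [div_le_div_iff₀ h1γ (by positivity)]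
      calc dist (F^[p] x) x * (4 * ((n:ℝ) + 1))
            ≤ (d * (1 - γ) / (4 * ((n:ℝ) + 1))) * (4 * ((n:ℝ) + 1)) := by
            have h4 : (0:ℝ) ≤ 4 * ((n:ℝ) + 1) := by positivity
            exact mul_le_mul_of_nonneg_right hplt.le h4
        _ = d * (1 - γ) := by field_simp
    choose ys hysΩ hysper hysd using H
    have hdle : ∀ n : ℕ, d / (4 * ((n:ℝ) + 1)) ≤ d / 4 := by
      intro n
      apply div_le_div_of_nonneg_left hd0.le (by norm_num)
      nlinarith [Nat.cast_nonneg (α := ℝ) n]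
    have hyseq : ∀ n, ys n = ys 0 := by
      intro n
      refine hsep (ys n) (hysΩ n) (ys 0) (hysΩ 0) (hysper n) (hysper 0) ?_
      calc dist (ys n) (ys 0) ≤ dist (ys n) x + dist x (ys 0) := dist_triangle _ _ _
        _ ≤ d / 4 + d / 4 := by
            refine add_le_add ?_ (le_trans (hysd 0) (hdle 0))
            rw [dist_comm]
            exact le_trans (hysd n) (hdle n)
        _ < d := by linarith
    have hxy0 : x = ys 0 := by
      have htend : Filter.Tendsto (fun n : ℕ => d / (4 * ((n:ℝ) + 1)))
          Filter.atTop (nhds 0) := by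
        have h1 : Filter.Tendsto (fun n : ℕ => (d/4) * (1 / ((n:ℝ) + 1)))
            Filter.atTop (nhds ((d/4) * 0)) :=
          tendsto_one_div_add_atTop_nhds_zero_nat.const_mul (d/4)
        simp only [mul_zero] at h1
        refine h1.congr fun n => ?_
        field_simp
      have hle0 : dist x (ys 0) ≤ 0 := by
        refine ge_of_tendsto' htend fun n => ?_
        rw [← hyseq n]
        exact hysd n
      exact dist_le_zero.mp hle0
    obtain ⟨p, hp1, hfix⟩ := hysper 0
    exact ⟨p, hp1, by rw [hxy0]; exact hfix⟩
  refine ⟨?_, hallper⟩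
  obtain ⟨t, htsub, htfin, hcover⟩ :=
    hMcompact.finite_cover_balls (show (0:ℝ) < d/2 by linarith)
  have hsub : Ω ⊆ ⋃ c ∈ t, (Ω ∩ Metric.ball c (d/2)) := by
    intro x hx
    obtain ⟨c, hc, hxc⟩ := Set.mem_iUnion₂.mp (hcover (hΩM hx))
    exact Set.mem_iUnion₂.mpr ⟨c, hc, hx, hxc⟩
  refine Set.Finite.subset (Set.Finite.biUnion htfin fun c _ => ?_) hsub
  refine Set.Subsingleton.finite ?_
  rintro a ⟨haΩ, hab⟩ b ⟨hbΩ, hbb⟩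
  refine hsep a haΩ b hbΩ (hallper a haΩ) (hallper b hbΩ) ?_
  calc dist a b ≤ dist a c + dist c b := dist_triangle _ _ _
    _ < d/2 + d/2 := add_lt_add (Metric.mem_ball.mp hab)
        (by rw [dist_comm]; exact Metric.mem_ball.mp hbb)
    _ = d := by ring
end

section
/- Consider the BMS map F : ℝ^N → ℝ^N, F_k(V) = γ·V_k·(1 − Z(V_k)) + ∑_{j=1}^{N} W_{kj}·Z(V_j) + I_k, where Z(x) = 1 if x ≥ θ and 0 otherwise, γ ∈ [0,1), W ∈ ℝ^{N×N}, I ∈ ℝ^N, and let M = [V_min, V_max]^N be a compact cube with F(M) ⊆ M. Let Ω = ⋃_{V ∈ M} ω(V) be the ω-limit set of M and assume d(Ω, 𝒮) = inf_{x ∈ Ω} min_{1≤i≤N} |x_i − θ| > 0, where 𝒮 = { V ∈ M : ∃ i, V_i = θ }. Then the raster plot is a faithful symbolic coding of the asymptotic dynamics: the map sending x ∈ Ω to its raster plot, i.e. to the function (t, k) ↦ Z((F^t x)_k) from ℕ × {1,…,N} to {0,1}, is injective on Ω. Equivalently, if x, y ∈ Ω satisfy (F^t x)_k ≥ θ ⇔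 (F^t y)_k ≥ θ for all t ∈ ℕ and all k, then x = y. -/
open Filter Topology Function Set

section Omega

variable {X : Type*} [TopologicalSpace X] {f : X → X} {u V : X}

theorem map_mem_omegaPts (hf : ContinuousAt f u) (hu : u ∈ omegaPts f V) :
    f u ∈ omegaPts f V := by
  obtain ⟨φ, hφ, hlim⟩ := hu
  refine ⟨fun n => φ n + 1, fun a b hab => Nat.succ_lt_succ (hφ hab), ?_⟩
  simp only [iterate_succ_apply']
  exact hf.tendsto.comp hlim

theorem mapsTo_iUnion_omegaPts {M : Set X}
    (hf : ∀ u ∈ ⋃ V ∈ M, omegaPts f V, ContinuousAt f u) :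
    MapsTo f (⋃ V ∈ M, omegaPts f V) (⋃ V ∈ M, omegaPts f V) := fun u hu => by
  obtain ⟨V, hV, huV⟩ := mem_iUnion₂.1 hu
  exact mem_iUnion₂.2 ⟨V, hV, map_mem_omegaPts (hf u hu) huV⟩

end Omega

section Dynamics

variable {X : Type*} [PseudoMetricSpace X] {f : X → X} {u V : X}

theorem continuousAt_of_dist_map_le {d : ℝ} (hd : 0 < d)
    (h : ∀ z, dist z u < d → dist (f z) (f u) ≤ dist z u) : ContinuousAt f u :=
  Metric.continuousAt_iff.2 fun ε hε =>
    ⟨min d ε, lt_min hd hε, fun _ hz =>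
      (h _ (hz.trans_le (min_le_left _ _))).trans_lt (hz.trans_le (min_le_right _ _))⟩

variable {Ω : Set X} {d : ℝ} (hΩ : MapsTo f Ω Ω)
  (hf : ∀ u ∈ Ω, ∀ z, dist z u < d → dist (f z) (f u) ≤ dist z u)
include hΩ hf

theorem dist_iterate_le_of_dist_lt {z : X} (hu : u ∈ Ω) (hz : dist z u < d) (t : ℕ) :
    dist (f^[t] z) (f^[t] u) ≤ dist z u := by
  induction t with
  | zero => simp
  | succ t ih =>
    rw [iterate_succ_apply', iterate_succ_apply']
    exact (hf _ (hΩ.iterate t hu) _ (ih.trans_lt hz)).trans ih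

theorem frequently_dist_iterate_self_lt (hd : 0 < d) (hu : u ∈ Ω) (huV : u ∈ omegaPts f V)
    {ε : ℝ} (hε : 0 < ε) : ∃ᶠ t in atTop, dist (f^[t] u) u < ε := by
  obtain ⟨φ, hφ, hlim⟩ := huV
  obtain ⟨J, hJ⟩ := Metric.tendsto_atTop.1 hlim (min (ε / 2) d) (by positivity)
  have hJε : dist (f^[φ J] V) u < ε / 2 := (hJ J le_rfl).trans_le (min_le_left _ _)
  have hJd : dist (f^[φ J] V) u < d := (hJ J le_rfl).trans_le (min_le_right _ _)
  refine frequently_atTop.2 fun T => ?_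
  set m := φ J + T
  have hm : m ≤ φ m := hφ.id_le m
  have hJm : J ≤ m := (hφ.id_le J).trans (Nat.le_add_right _ _)
  -- the orbit of `V` is near `u` at times `φ J` and `φ m`; shadowing passes this return to `u`
  have hshadow : dist (f^[φ m] V) (f^[φ m - φ J] u) < ε / 2 := by
    rw [show φ m = (φ m - φ J) + φ J by omega, iterate_add_apply, Nat.add_sub_cancel]
    exact (dist_iterate_le_of_dist_lt hΩ hf hu hJd _).trans_lt hJε
  refine ⟨φ m - φ J, by omega, ?_⟩
  calc dist (f^[φ m - φ J] u) u
      ≤ dist (f^[φ m] V) (f^[φ m - φ J] u) + dist (f^[φ m] V) u := dist_triangle_left _ _ _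
    _ < ε / 2 + ε / 2 := add_lt_add hshadow ((hJ m hJm).trans_le (min_le_left _ _))
    _ = ε := add_halves ε

theorem dist_iterate_add_le {v : X} {a b : ℕ} (hv : v ∈ Ω) (hav : dist (f^[a] u) v < d) :
    dist (f^[b + a] u) u ≤ dist (f^[a] u) v + dist (f^[b] v) u := by
  rw [iterate_add_apply]
  exact (dist_triangle _ _ _).trans
    (add_le_add_left (dist_iterate_le_of_dist_lt hΩ hf hv hav b) _)

theorem frequently_dist_iterate_lt_and_dist_iterate_lt (hd : 0 < d) {x y : X} (hx : x ∈ Ω)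
    (hy : y ∈ Ω) (hxrec : ∀ ε > 0, ∃ᶠ t in atTop, dist (f^[t] x) x < ε)
    (hyrec : ∀ ε > 0, ∃ᶠ t in atTop, dist (f^[t] y) y < ε)
    (hxy : Tendsto (fun t => dist (f^[t] x) (f^[t] y)) atTop (𝓝 0)) {ε : ℝ} (hε : 0 < ε) :
    ∃ᶠ t in atTop, dist (f^[t] x) x < ε ∧ dist (f^[t] y) y < ε := by
  set η := min (ε / 4) (d / 4)
  have hη : 0 < η := by positivity
  have hηε : 4 * η ≤ ε := by linarith [min_le_left (ε / 4) (d / 4)]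
  have hηd : 2 * η < d := by linarith [min_le_right (ε / 4) (d / 4)]
  have hclose : ∀ᶠ t in atTop, dist (f^[t] x) (f^[t] y) < η :=
    (Metric.tendsto_nhds.1 hxy η hη).mono fun t ht => by simpa using ht
  refine frequently_atTop.2 fun T => ?_
  obtain ⟨a, haT, hay, haxy⟩ := frequently_atTop.1 ((hyrec η hη).and_eventually hclose) T
  obtain ⟨b, -, hbx, hbxy⟩ := frequently_atTop.1 ((hxrec η hη).and_eventually hclose) T
  -- `f^[a] x` is near `y` and `f^[b] y` is near `x`, so `a + b` is a return time for both
  have hax : dist (f^[a] x) y < 2 * η := by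
    linarith [dist_triangle (f^[a] x) (f^[a] y) y]
  have hby : dist (f^[b] y) x < 2 * η := by
    linarith [dist_triangle (f^[b] y) (f^[b] x) x, dist_comm (f^[b] y) (f^[b] x)]
  refine ⟨b + a, by omega, ?_, ?_⟩
  · linarith [dist_iterate_add_le hΩ hf hy (hax.trans hηd) (b := b)]
  · rw [add_comm]
    linarith [dist_iterate_add_le hΩ hf hx (hby.trans hηd) (b := a)]

end Dynamics

theorem eq_of_tendsto_dist_iterate {X : Type*} [MetricSpace X] {f : X → X} {Ω : Set X} {d : ℝ}
    (hΩ : MapsTo f Ω Ω) (hf : ∀ u ∈ Ω, ∀ z, dist z u < d → dist (f z) (f u) ≤ dist z u)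
    (hd : 0 < d) {x y : X} (hx : x ∈ Ω) (hy : y ∈ Ω)
    (hxrec : ∀ ε > 0, ∃ᶠ t in atTop, dist (f^[t] x) x < ε)
    (hyrec : ∀ ε > 0, ∃ᶠ t in atTop, dist (f^[t] y) y < ε)
    (hxy : Tendsto (fun t => dist (f^[t] x) (f^[t] y)) atTop (𝓝 0)) : x = y := by
  refine eq_of_forall_dist_le fun ε hε => ?_
  have hclose : ∀ᶠ t in atTop, dist (f^[t] x) (f^[t] y) < ε / 3 :=
    (Metric.tendsto_nhds.1 hxy (ε / 3) (by positivity)).mono fun t ht => by simpa using ht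
  obtain ⟨t, ⟨hxt, hyt⟩, hxyt⟩ :=
    ((frequently_dist_iterate_lt_and_dist_iterate_lt hΩ hf hd hx hy hxrec hyrec hxy
      (by positivity : 0 < ε / 3)).and_eventually hclose).exists
  linarith [dist_triangle4 x (f^[t] x) (f^[t] y) y, dist_comm x (f^[t] x)]

section BMS

variable {ι : Type*} [Fintype ι] {θ γ : ℝ} {W : ι → ι → ℝ} {I : ι → ℝ} {x y z u : ι → ℝ}

variable (θ γ W I) in
noncomputable def bmsMap (V : ι → ℝ) : ι → ℝ :=
  fun k => γ * V k * (1 - Z θ (V k)) + (∑ j, W k j * Z θ (V j)) + I k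

theorem Z_congr {a b : ℝ} (h : θ ≤ a ↔ θ ≤ b) : Z θ a = Z θ b := by
  simp only [Z, h]

theorem one_sub_Z_mem_Icc (a : ℝ) : 1 - Z θ a ∈ Icc (0 : ℝ) 1 := by
  unfold Z
  split_ifs <;> norm_num

theorem firing_iff_of_abs_sub_lt {a b : ℝ} (h : |a - b| < |b - θ|) : θ ≤ a ↔ θ ≤ b := by
  rcases le_or_gt θ b with hb | hb
  · rw [abs_of_nonneg (sub_nonneg.2 hb)] at h
    exact ⟨fun _ => hb, fun _ => by linarith [(abs_lt.1 h).1]⟩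
  · rw [abs_of_neg (sub_neg.2 hb)] at h
    exact ⟨fun ha => by linarith [(abs_lt.1 h).2], fun h' => absurd h' (not_le.2 hb)⟩

theorem bmsMap_sub_bmsMap (h : ∀ k, θ ≤ z k ↔ θ ≤ u k) (k : ι) :
    bmsMap θ γ W I z k - bmsMap θ γ W I u k = γ * (z k - u k) * (1 - Z θ (u k)) := by
  simp only [bmsMap, fun j => Z_congr (h j)]
  ring

theorem dist_bmsMap_le (hγ : 0 ≤ γ) (h : ∀ k, θ ≤ z k ↔ θ ≤ u k) :
    dist (bmsMap θ γ W I z) (bmsMap θ γ W I u) ≤ γ * dist z u := by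
  refine (dist_pi_le_iff (by positivity)).2 fun k => ?_
  obtain ⟨hZ₀, hZ₁⟩ := one_sub_Z_mem_Icc (θ := θ) (u k)
  rw [Real.dist_eq, bmsMap_sub_bmsMap h, abs_mul, abs_mul, abs_of_nonneg hγ, ← Real.dist_eq,
    abs_of_nonneg hZ₀]
  calc γ * dist (z k) (u k) * (1 - Z θ (u k)) ≤ γ * dist (z k) (u k) :=
        mul_le_of_le_one_right (by positivity) hZ₁
    _ ≤ γ * dist z u := mul_le_mul_of_nonneg_left (dist_le_pi_dist z u k) hγ

theorem dist_bmsMap_le_of_dist_lt (hγ₀ : 0 ≤ γ) (hγ₁ : γ ≤ 1) {d : ℝ} (hu : ∀ i, d ≤ |u i - θ|)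
    (hz : dist z u < d) : dist (bmsMap θ γ W I z) (bmsMap θ γ W I u) ≤ dist z u := by
  refine (dist_bmsMap_le hγ₀ fun k => firing_iff_of_abs_sub_lt ?_).trans
    (mul_le_of_le_one_left dist_nonneg hγ₁)
  rw [← Real.dist_eq]
  exact ((dist_le_pi_dist z u k).trans_lt hz).trans_le (hu k)

theorem dist_iterate_bmsMap_le (hγ : 0 ≤ γ)
    (hraster : ∀ t k, θ ≤ (bmsMap θ γ W I)^[t] x k ↔ θ ≤ (bmsMap θ γ W I)^[t] y k) (t : ℕ) :
    dist ((bmsMap θ γ W I)^[t] x) ((bmsMap θ γ W I)^[t] y) ≤ γ ^ t * dist x y := by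
  induction t with
  | zero => simp
  | succ t ih =>
    rw [iterate_succ_apply', iterate_succ_apply', pow_succ', mul_assoc]
    exact (dist_bmsMap_le hγ (hraster t)).trans (mul_le_mul_of_nonneg_left ih hγ)

theorem tendsto_dist_iterate_bmsMap (hγ₀ : 0 ≤ γ) (hγ₁ : γ < 1)
    (hraster : ∀ t k, θ ≤ (bmsMap θ γ W I)^[t] x k ↔ θ ≤ (bmsMap θ γ W I)^[t] y k) :
    Tendsto (fun t => dist ((bmsMap θ γ W I)^[t] x) ((bmsMap θ γ W I)^[t] y)) atTop (𝓝 0) :=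
  squeeze_zero (fun _ => dist_nonneg) (dist_iterate_bmsMap_le hγ₀ hraster) <| by
    simpa using (tendsto_pow_atTop_nhds_zero_of_lt_one hγ₀ hγ₁).mul_const (dist x y)

end BMS

theorem BMS_raster_plot_injective_general
    (N : ℕ) (θ γ : ℝ) (hγ0 : 0 ≤ γ) (hγ1 : γ < 1)
    (W : Fin N → Fin N → ℝ) (I : Fin N → ℝ)
    (F : (Fin N → ℝ) → (Fin N → ℝ))
    (hF : ∀ V k, F V k =
      γ * V k * (1 - Z θ (V k)) + (∑ j, W k j * Z θ (V j)) + I k)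
    (M : Set (Fin N → ℝ))
    (Ω : Set (Fin N → ℝ))
    (hΩ : Ω = ⋃ V ∈ M, omegaPts F V)
    (hdist : ∃ d : ℝ, 0 < d ∧ ∀ x ∈ Ω, ∀ i : Fin N, d ≤ |x i - θ|) :
    ∀ x ∈ Ω, ∀ y ∈ Ω,
      (∀ t : ℕ, ∀ k : Fin N, θ ≤ F^[t] x k ↔ θ ≤ F^[t] y k) → x = y := by
  obtain rfl : F = bmsMap θ γ W I := funext fun V => funext (hF V)
  obtain ⟨d, hd, hdΩ⟩ := hdist
  intro x hx y hy hraster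
  have hnear : ∀ u ∈ Ω, ∀ z, dist z u < d →
      dist (bmsMap θ γ W I z) (bmsMap θ γ W I u) ≤ dist z u :=
    fun u hu _ => dist_bmsMap_le_of_dist_lt hγ0 hγ1.le (hdΩ u hu)
  have hinv : MapsTo (bmsMap θ γ W I) Ω Ω := by
    subst hΩ
    exact mapsTo_iUnion_omegaPts fun u hu => continuousAt_of_dist_map_le hd (hnear u hu)
  have hrec : ∀ u ∈ Ω, ∀ ε > 0, ∃ᶠ t in atTop, dist ((bmsMap θ γ W I)^[t] u) u < ε := by
    intro u hu ε hε
    obtain ⟨V, -, huV⟩ := mem_iUnion₂.1 (hΩ ▸ hu)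
    exact frequently_dist_iterate_self_lt hinv hnear hd hu huV hε
  exact eq_of_tendsto_dist_iterate hinv hnear hd hx hy (hrec x hx) (hrec y hy)
    (tendsto_dist_iterate_bmsMap hγ0 hγ1 hraster)

/-- Theorem 2, item 2 of the paper: if the ω-limit set `Ω` of the invariant cube
`M` under the BMS map stays at a positive distance from the singularity set
`𝒮 = {V : ∃ i, V i = θ}`, then the raster plot is a faithful symbolic coding
of the asymptotic dynamics: two points of `Ω` whose orbits have the same raster
plot coincide. -/
theorem BMS_raster_plot_injective
    (N : ℕ) (hN : 1 ≤ N) (θ γ : ℝ) (hγ0 : 0 ≤ γ) (hγ1 : γ < 1)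
    (W : Fin N → Fin N → ℝ) (I : Fin N → ℝ)
    (F : (Fin N → ℝ) → (Fin N → ℝ))
    (hF : ∀ V k, F V k =
      γ * V k * (1 - Z θ (V k)) + (∑ j, W k j * Z θ (V j)) + I k)
    (Vmin Vmax : ℝ)
    (M : Set (Fin N → ℝ))
    (hM : M = {V | ∀ k, V k ∈ Set.Icc Vmin Vmax})
    (hInv : ∀ V ∈ M, F V ∈ M)
    (Ω : Set (Fin N → ℝ))
    (hΩ : Ω = ⋃ V ∈ M, omegaPts F V)
    (hdist : ∃ d : ℝ, 0 < d ∧ ∀ x ∈ Ω, ∀ i : Fin N, d ≤ |x i - θ|) :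
    ∀ x ∈ Ω, ∀ y ∈ Ω,
      (∀ t : ℕ, ∀ k : Fin N, θ ≤ F^[t] x k ↔ θ ≤ F^[t] y k) → x = y :=
  BMS_raster_plot_injective_general N θ γ hγ0 hγ1 W I F hF M Ω hΩ hdist
end

section
/- Consider the BMS map F : ℝ^N → ℝ^N, F_k(V) = γ·V_k·(1 − Z(V_k)) + ∑_{j=1}^{N} W_{kj}·Z(V_j) + I_k, where Z(x) = 1 if x ≥ θ and 0 otherwise, γ ∈ [0,1), W ∈ ℝ^{N×N} and I ∈ ℝ^N. If V, V′ ∈ ℝ^N have the same firing state, i.e. (V_k ≥ θ) ⇔ (V′_k ≥ θ) for every k ∈ {1,…,N}, then max_{1≤k≤N} |F_k(V) − F_k(V′)| ≤ γ · max_{1≤k≤N} |V_k − V′_k|. In particular, a perturbation of a membrane-potential vector that does not change its firing state is contracted by a factor γ < 1 in sup-norm in one time step. -/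
/-- One-step local contraction of the BMS map: if `V` and `V'` have the same
firing state (`V_k ≥ θ ⇔ V'_k ≥ θ` for every `k`), then
`max_k |F_k(V) - F_k(V')| ≤ γ · max_k |V_k - V'_k|`, so a perturbation not
changing the firing state is contracted by the factor `γ < 1` in sup-norm. -/
theorem BMS_one_step_contraction
    (N : ℕ) (hN : 1 ≤ N) (θ γ : ℝ) (hγ0 : 0 ≤ γ) (hγ1 : γ < 1)
    (W : Fin N → Fin N → ℝ) (I : Fin N → ℝ)
    (F : (Fin N → ℝ) → (Fin N → ℝ))
    (hF : ∀ V k, F V k =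
      γ * V k * (1 - Z θ (V k)) + (∑ j, W k j * Z θ (V j)) + I k)
    (V V' : Fin N → ℝ)
    (hsame : ∀ k : Fin N, θ ≤ V k ↔ θ ≤ V' k) :
    (⨆ k : Fin N, |F V k - F V' k|) ≤ γ * ⨆ k : Fin N, |V k - V' k| := by
  haveI : Nonempty (Fin N) := ⟨⟨0, hN⟩⟩
  have hZ : ∀ j, Z θ (V j) = Z θ (V' j) := by
    intro j; unfold Z; simp [hsame j]
  apply ciSup_le
  intro k
  have hle : |F V k - F V' k| ≤ γ * |V k - V' k| := by
    rw [hF, hF]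
    have : γ * V k * (1 - Z θ (V k)) + (∑ j, W k j * Z θ (V j)) + I k -
        (γ * V' k * (1 - Z θ (V' k)) + (∑ j, W k j * Z θ (V' j)) + I k) =
        γ * (V k - V' k) * (1 - Z θ (V k)) := by
      rw [hZ k]
      have : ∀ j, W k j * Z θ (V j) = W k j * Z θ (V' j) := fun j => by rw [hZ j]
      rw [Finset.sum_congr rfl (fun j _ => this j)]
      ring
    rw [this, abs_mul, abs_mul, abs_of_nonneg hγ0]
    have h1 : |1 - Z θ (V k)| ≤ 1 := by
      unfold Z; split <;> simp
    calc γ * |V k - V' k| * |1 - Z θ (V k)| ≤ γ * |V k - V' k| * 1 :=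
          mul_le_mul_of_nonneg_left h1 (by positivity)
      _ = γ * |V k - V' k| := by ring
  refine hle.trans (mul_le_mul_of_nonneg_left ?_ hγ0)
  exact le_ciSup (f := fun k => |V k - V' k|) (Finite.bddAbove_range _) k
end
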